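/- For ℓ ∈ ℕ, ζ ∈ {0,1} and 0 ≤ k ≤ ℓ+ζ, every standard configuration η^{ℓ,ζ,k} (whose tile support is an ℓ×(ℓ+ζ) quasi-square with a bar of length k attached to one of its longest sides, positioned so that all its particles of type 2 lie in Λ⁻⁻) has energy H(η^{ℓ,ζ,k}) = −ε[ℓ(ℓ+ζ) + k] + Δ1·[ℓ + (ℓ+ζ) + 1 + 1_{k>0}], where ε = 4U − Δ1 − Δ2. -/

import Mathlib

/- Common framework: two-type Kawasaki dynamics on a finite box in ℤ². -/

abbrev Site := ℤ × ℤ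
abbrev Cell := ℤ × ℤ

/-- Nearest-neighbour adjacency on ℤ². -/
def adjacent (x y : Site) : Prop := |x.1 - y.1| + |x.2 - y.2| = 1

instance (x y : Site) : Decidable (adjacent x y) :=
  inferInstanceAs (Decidable (|x.1 - y.1| + |x.2 - y.2| = 1))

/-- The four nearest neighbours of a site. -/
def nbrs (x : Site) : Finset Site :=
  {(x.1 + 1, x.2), (x.1 - 1, x.2), (x.1, x.2 + 1), (x.1, x.2 - 1)}

/-- Internal boundary ∂⁻Λ of a finite set Λ ⊂ ℤ². -/
def intBdry (Λ : Finset Site) : Finset Site := Λ.filter (fun x => ¬ nbrs x ⊆ Λ)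

/-- Λ⁻ = Λ ∖ ∂⁻Λ. -/
def inner1 (Λ : Finset Site) : Finset Site := Λ \ intBdry Λ

/-- Λ⁻⁻ = Λ⁻ ∖ ∂⁻Λ⁻. -/
def inner2 (Λ : Finset Site) : Finset Site := inner1 Λ \ intBdry (inner1 Λ)

/-- A configuration on Λ: each site of Λ carries 0 (empty), 1 (type 1) or 2 (type 2);
sites outside Λ are empty. -/
structure Config (Λ : Finset Site) where
  val : Site → Fin 3
  zero_outside : ∀ x, x ∉ Λ → val x = 0

/-- Number of particles of type 1. -/
def numType1 {Λ : Finset Site} (η : Config Λ) : ℕ := (Λ.filter (fun x => η.val x = 1)).card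

/-- Number of particles of type 2. -/
def numType2 {Λ : Finset Site} (η : Config Λ) : ℕ := (Λ.filter (fun x => η.val x = 2)).card

/-- Number of active bonds: unordered n.n. pairs of sites of Λ⁻, one carrying a 1 and the
other a 2 (each such unordered pair is counted once, as the ordered pair (type1,type2)). -/
def numBonds {Λ : Finset Site} (η : Config Λ) : ℕ :=
  ((inner1 Λ ×ˢ inner1 Λ).filter
    (fun p => adjacent p.1 p.2 ∧ η.val p.1 = 1 ∧ η.val p.2 = 2)).card

/-- The Hamiltonian H(η) = −U·B(η) + Δ1·n1(η) + Δ2·n2(η). -/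
noncomputable def energy (U Δ1 Δ2 : ℝ) {Λ : Finset Site} (η : Config Λ) : ℝ :=
  -U * numBonds η + Δ1 * numType1 η + Δ2 * numType2 η

/-- Allowed moves of the Kawasaki dynamics: hopping inside Λ, creation and annihilation
at the internal boundary. -/
def Communicates {Λ : Finset Site} (η η' : Config Λ) : Prop :=
  (∃ x ∈ Λ, ∃ y ∈ Λ, adjacent x y ∧ η.val x = 0 ∧ η.val y ≠ 0 ∧
      η'.val = Function.update (Function.update η.val x (η.val y)) y 0) ∨
  (∃ x ∈ intBdry Λ, ∃ v : Fin 3, v ≠ 0 ∧ η.val x = 0 ∧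
      η'.val = Function.update η.val x v) ∨
  (∃ x ∈ intBdry Λ, η.val x ≠ 0 ∧ η'.val = Function.update η.val x 0)

/-- ω is a path of allowed moves from η to η′. -/
def IsPath {Λ : Finset Site} (ω : List (Config Λ)) (η η' : Config Λ) : Prop :=
  ω.head? = some η ∧ ω.getLast? = some η' ∧ ω.Chain' Communicates

/-- Communication height between two sets of configurations:
Φ(A,B) = min over paths from A to B of the maximal energy along the path. -/
noncomputable def commHeightSet (U Δ1 Δ2 : ℝ) {Λ : Finset Site}
    (A B : Set (Config Λ)) : ℝ :=
  sInf {m : ℝ | ∃ η ∈ A, ∃ η' ∈ B, ∃ ω : List (Config Λ),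
    IsPath ω η η' ∧ ∀ ξ ∈ ω, energy U Δ1 Δ2 ξ ≤ m}

/-- Communication height Φ(η,η′). -/
noncomputable def commHeight (U Δ1 Δ2 : ℝ) {Λ : Finset Site} (η η' : Config Λ) : ℝ :=
  commHeightSet U Δ1 Δ2 {η} {η'}

/-- Stability level V_η = Φ(η, I_η) − H(η), where I_η = {ξ : H(ξ) < H(η)}. -/
noncomputable def stabLevel (U Δ1 Δ2 : ℝ) {Λ : Finset Site} (η : Config Λ) : ℝ :=
  commHeightSet U Δ1 Δ2 {η} {ξ : Config Λ | energy U Δ1 Δ2 ξ < energy U Δ1 Δ2 η}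
    - energy U Δ1 Δ2 η

/-- The set of stable configurations (global minimizers of H). -/
def Xstab (U Δ1 Δ2 : ℝ) (Λ : Finset Site) : Set (Config Λ) :=
  {η | ∀ ξ : Config Λ, energy U Δ1 Δ2 η ≤ energy U Δ1 Δ2 ξ}

/-- The set of metastable configurations (non-stable configurations of maximal
stability level). -/
def Xmeta (U Δ1 Δ2 : ℝ) (Λ : Finset Site) : Set (Config Λ) :=
  {η | η ∉ Xstab U Δ1 Δ2 Λ ∧
    ∀ ξ : Config Λ, ξ ∉ Xstab U Δ1 Δ2 Λ → stabLevel U Δ1 Δ2 ξ ≤ stabLevel U Δ1 Δ2 η}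

/-- The empty configuration □. -/
def emptyConfig (Λ : Finset Site) : Config Λ := ⟨fun _ => 0, fun _ _ => rfl⟩

/-- The critical length ℓ* = ⌈Δ1/(4U − Δ1 − Δ2)⌉. -/
noncomputable def lstar (U Δ1 Δ2 : ℝ) : ℤ := ⌈Δ1 / (4 * U - Δ1 - Δ2)⌉

/-- The box Λ: in dual coordinates u(x) = ((x1−x2)/2,(x1+x2)/2) the
(L+3/2)×(L+3/2) square centered at the origin, i.e. |x1−x2| ≤ L+1 and |x1+x2| ≤ L+1. -/
noncomputable def latBox (L : ℕ) : Finset Site :=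
  (Finset.Icc (-(L : ℤ) - 1) ((L : ℤ) + 1) ×ˢ Finset.Icc (-(L : ℤ) - 1) ((L : ℤ) + 1)).filter
    (fun x => |x.1 - x.2| ≤ (L : ℤ) + 1 ∧ |x.1 + x.2| ≤ (L : ℤ) + 1)

/-- The m×n dual rectangle of sites (in dual coordinates) with dual lower-left corner p
(in standard coordinates): sites p + i·(1,−1) + j·(1,1) for 0 ≤ i < m, 0 ≤ j < n.
All these sites have the same parity. -/
def dualRect (p : Site) (m n : ℕ) : Finset Site :=
  (Finset.range m ×ˢ Finset.range n).image
    (fun ij => ((p.1 + (ij.1 : ℤ) + (ij.2 : ℤ), p.2 + (ij.2 : ℤ) - (ij.1 : ℤ)) : Site))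

/-- The sites adjacent to a set S but not in S. -/
def siteBorder (S : Finset Site) : Finset Site := S.biUnion nbrs \ S

/-- ⊞: the tb-tiled configurations whose particles of type 2 occupy an L×L square in dual
coordinates filling Λ⁻ (type-2 sites in Λ⁻⁻, surrounding type-1 sites in Λ⁻); these are
the two largest checkerboard droplets (one of each parity). -/
def boxPlus (L : ℕ) : Set (Config (latBox L)) :=
  {η | ∃ p : Site,
      (∀ x, η.val x = 2 ↔ x ∈ dualRect p L L) ∧
      (∀ x, η.val x = 1 ↔ x ∈ siteBorder (dualRect p L L)) ∧
      dualRect p L L ⊆ inner2 (latBox L) ∧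
      siteBorder (dualRect p L L) ⊆ inner1 (latBox L)}

/-- The active-bond relation between sites. -/
def bondRel {Λ : Finset Site} (η : Config Λ) (x y : Site) : Prop :=
  x ∈ inner1 Λ ∧ y ∈ inner1 Λ ∧ adjacent x y ∧
  ((η.val x = 1 ∧ η.val y = 2) ∨ (η.val x = 2 ∧ η.val y = 1))

/-- C is a cluster of η: a maximal connected component of the occupied sites under the
active-bond relation. -/
def IsCluster {Λ : Finset Site} (η : Config Λ) (C : Finset Site) : Prop :=
  ∃ x : Site, η.val x ≠ 0 ∧ ∀ y : Site, y ∈ C ↔ Relation.ReflTransGen (bondRel η) x y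

/-- The occupied sites of η form a single cluster. -/
def SingleCluster {Λ : Finset Site} (η : Config Λ) : Prop :=
  ∃ x : Site, η.val x ≠ 0 ∧
    ∀ y : Site, η.val y ≠ 0 → Relation.ReflTransGen (bondRel η) x y

/-- Dual coordinates, renormalized to land in ℤ² (within a fixed parity class this maps
dual neighbours to adjacent cells). -/
def cellOf (x : Site) : Cell := ((x.1 - x.2).fdiv 2, (x.1 + x.2).fdiv 2)

/-- The sites of Λ occupied by particles of type 2. -/
def type2Sites {Λ : Finset Site} (η : Config Λ) : Finset Site :=
  Λ.filter (fun x => η.val x = 2)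

/-- Tile support of a configuration: the polyomino in dual coordinates given by the unit
squares centered at the particles of type 2. -/
def tileSupport {Λ : Finset Site} (η : Config Λ) : Finset Cell :=
  (type2Sites η).image cellOf

/- ----------  Polyominoes ---------- -/

/-- Perimeter of a polyomino (number of boundary edges, inner boundaries included). -/
def perim (A : Finset Cell) : ℕ :=
  A.sum (fun c => ((nbrs c).filter (fun d => d ∉ A)).card)

def adjIn (A : Finset Cell) (x y : Cell) : Prop := x ∈ A ∧ y ∈ A ∧ adjacent x y

/-- Connectedness of a polyomino. -/
def PolyConnected (A : Finset Cell) : Prop :=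
  A.Nonempty ∧ ∀ x ∈ A, ∀ y ∈ A, Relation.ReflTransGen (adjIn A) x y

/-- Number of holes: bounded (= finite) connected components of the complement. -/
noncomputable def numHoles (A : Finset Cell) : ℕ :=
  Set.ncard {C : Set Cell | ∃ d : Cell, d ∉ A ∧
    C = {e : Cell | Relation.ReflTransGen (fun u v => adjacent u v ∧ u ∉ A ∧ v ∉ A) d e} ∧
    C.Finite}

/-- The four cells having lattice point v as a corner. -/
def cellsAt (v : Cell) : Finset Cell :=
  {(v.1 - 1, v.2 - 1), (v.1 - 1, v.2), (v.1, v.2 - 1), v}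

/-- The lattice points that are corners of cells of A. -/
def vertexSet (A : Finset Cell) : Finset Cell :=
  A.biUnion (fun c => {c, (c.1 + 1, c.2), (c.1, c.2 + 1), (c.1 + 1, c.2 + 1)})

def occAt (A : Finset Cell) (v : Cell) : ℕ := ((cellsAt v).filter (fun c => c ∈ A)).card

/-- Number of convex corners ψ(A): vertices with exactly one incident occupied cell. -/
def convexCorners (A : Finset Cell) : ℕ :=
  (vertexSet A).sum (fun v => if occAt A v = 1 then 1 else 0)

/-- Number of concave corners φ(A): a vertex with three incident occupied cells counts
once, a vertex with two diagonally opposite occupied cells counts twice. -/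
def concaveCorners (A : Finset Cell) : ℕ :=
  (vertexSet A).sum (fun v =>
    if occAt A v = 3 then 1
    else if occAt A v = 2 ∧ (((v.1 - 1, v.2 - 1) ∈ A ∧ v ∈ A) ∨
          ((v.1 - 1, v.2) ∈ A ∧ (v.1, v.2 - 1) ∈ A)) then 2
    else 0)

/-- T(A) = 2P(A) + ψ(A) − φ(A). -/
def Tpoly (A : Finset Cell) : ℤ :=
  2 * (perim A : ℤ) + (convexCorners A : ℤ) - (concaveCorners A : ℤ)

/-- For connected polyominoes, T(A) = 2P(A) + 4 − 4Q(A). -/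
noncomputable def Tconn (A : Finset Cell) : ℤ :=
  2 * (perim A : ℤ) + 4 - 4 * (numHoles A : ℤ)

/-- Width (number of columns) of the circumscribing rectangle. -/
def polyWidth (A : Finset Cell) : ℤ :=
  (WithBot.unbotD 0 (A.image Prod.fst).max) - (WithTop.untopD 0 (A.image Prod.fst).min) + 1

/-- Height (number of rows) of the circumscribing rectangle. -/
def polyHeight (A : Finset Cell) : ℤ :=
  (WithBot.unbotD 0 (A.image Prod.snd).max) - (WithTop.untopD 0 (A.image Prod.snd).min) + 1

/-- A polyomino is monotone if its perimeter equals the perimeter of its circumscribing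
rectangle. -/
def MonotonePoly (A : Finset Cell) : Prop :=
  (perim A : ℤ) = 2 * (polyWidth A + polyHeight A)

/-- The reference standard polyomino: an (l+ζ)×l rectangle (quasi-square, ζ ∈ {0,1})
with a bar of length k attached to a longest side, starting at offset a. -/
def baseStd (l ζ a k : ℕ) : Finset Cell :=
  ((Finset.range (l + ζ)) ×ˢ (Finset.range l)).image
      (fun q => (((q.1 : ℤ), (q.2 : ℤ)) : Cell))
    ∪ (Finset.range k).image (fun i => ((((a + i : ℕ) : ℤ), (l : ℤ)) : Cell))

/-- The eight symmetries of the square lattice. -/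
def dihedralMaps : List (Cell → Cell) :=
  [fun c => (c.1, c.2), fun c => (-c.1, c.2), fun c => (c.1, -c.2), fun c => (-c.1, -c.2),
   fun c => (c.2, c.1), fun c => (-c.2, c.1), fun c => (c.2, -c.1), fun c => (-c.2, -c.1)]

/-- A standard polyomino: a quasi-square with possibly a bar attached to one of its
longest sides (up to lattice symmetries and translations). -/
def IsStandardPoly (A : Finset Cell) : Prop :=
  ∃ l ζ a k : ℕ, 1 ≤ l ∧ ζ ≤ 1 ∧ a + k ≤ l + ζ ∧
    ∃ f ∈ dihedralMaps, ∃ t : Cell,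
      A = (baseStd l ζ a k).image (fun c => (((f c).1 + t.1, (f c).2 + t.2) : Cell))

/- ----------  tb-tiled configurations ---------- -/

/-- V_{*,k}: configurations with exactly k particles of type 2, all lying in Λ⁻⁻. -/
def VStar (Λ : Finset Site) (k : ℕ) : Set (Config Λ) :=
  {η | numType2 η = k ∧ ∀ x, η.val x = 2 → x ∈ inner2 Λ}

/-- V_{*,k}^{4k}: configurations of V_{*,k} with exactly 4k active bonds and no isolated
particle of type 1 (the tb-tiled configurations with k particles of type 2). -/
def VTiled (Λ : Finset Site) (k : ℕ) : Set (Config Λ) :=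
  {η | η ∈ VStar Λ k ∧ numBonds η = 4 * k ∧
    ∀ x, η.val x = 1 → ∃ y ∈ nbrs x, η.val y = 2}

/-- All particles of type 2 have the same (site) parity. -/
def SameParity2 {Λ : Finset Site} (η : Config Λ) : Prop :=
  ∀ x y : Site, η.val x = 2 → η.val y = 2 → (x.1 + x.2) % 2 = (y.1 + y.2) % 2

/-- A standard configuration: tile support a standard polyomino (all type-2 particles of
one parity). -/
def IsStandardConfig {Λ : Finset Site} (η : Config Λ) : Prop :=
  SameParity2 η ∧ IsStandardPoly (tileSupport η)

/-- A tb-tiled configuration: at least one particle of type 2, every particle of type 2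
saturated, no isolated particle of type 1. -/
def IsTbTiled {Λ : Finset Site} (η : Config Λ) : Prop :=
  (∃ x, η.val x = 2) ∧
  (∀ x, η.val x = 2 → ∀ y ∈ nbrs x, η.val y = 1) ∧
  (∀ x, η.val x = 1 → ∃ y ∈ nbrs x, η.val y = 2)

/-- η is the tb-tiled droplet with type-2 sites S: type-2 exactly on S, type-1 exactly
on the border of S, empty elsewhere. -/
def IsTbDroplet {Λ : Finset Site} (η : Config Λ) (S : Finset Site) : Prop :=
  (∀ x, η.val x = 2 ↔ x ∈ S) ∧ (∀ x, η.val x = 1 ↔ x ∈ siteBorder S)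

/- ----------  cluster-wise quantities ---------- -/

def numType1In {Λ : Finset Site} (η : Config Λ) (C : Finset Site) : ℕ :=
  (C.filter (fun x => η.val x = 1)).card

def numType2In {Λ : Finset Site} (η : Config Λ) (C : Finset Site) : ℕ :=
  (C.filter (fun x => η.val x = 2)).card

def numBondsIn {Λ : Finset Site} (η : Config Λ) (C : Finset Site) : ℕ :=
  ((C ×ˢ C).filter (fun q => q.1 ∈ inner1 Λ ∧ q.2 ∈ inner1 Λ ∧ adjacent q.1 q.2 ∧
    η.val q.1 = 1 ∧ η.val q.2 = 2)).card

def tileSupportIn {Λ : Finset Site} (η : Config Λ) (C : Finset Site) : Finset Cell :=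
  (C.filter (fun x => η.val x = 2)).image cellOf

/-- Number of active bonds incident to the site x. -/
def bondDeg {Λ : Finset Site} (η : Config Λ) (x : Site) : ℕ :=
  ((nbrs x).filter (fun y => x ∈ inner1 Λ ∧ y ∈ inner1 Λ ∧
    ((η.val x = 1 ∧ η.val y = 2) ∨ (η.val x = 2 ∧ η.val y = 1)))).card

/-- Number of missing bonds of the type-1 particles of C. -/
def missingBonds {Λ : Finset Site} (η : Config Λ) (C : Finset Site) : ℤ :=
  ∑ x ∈ C.filter (fun x => η.val x = 1), (4 - (bondDeg η x : ℤ))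

/- ----------  geometry for the energy-reduction mechanisms ---------- -/

/-- A site is lattice-connecting: there is a n.n. path of empty sites from it to ∂⁻Λ. -/
def LatticeConnecting {Λ : Finset Site} (η : Config Λ) (x : Site) : Prop :=
  ∃ l : List Site, List.Chain adjacent x l ∧
    (x :: l).getLast (List.cons_ne_nil x l) ∈ intBdry Λ ∧
    ∀ y ∈ l, y ∈ Λ ∧ η.val y = 0

/-- A pending dimer (x,y): a lattice-connecting type-1 particle x whose unique active
bond is with the adjacent type-2 particle y, which has at most three active bonds. -/
def PendingDimer {Λ : Finset Site} (η : Config Λ) (x y : Site) : Prop :=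
  bondRel η x y ∧ η.val x = 1 ∧ η.val y = 2 ∧ LatticeConnecting η x ∧
  bondDeg η x = 1 ∧ bondDeg η y ≤ 3

/-- The sites of a horizontal (in dual coordinates) beam of length l: l+1 particles of
type 1 at mutual dual distance 1, with left-most site p. -/
def beamSites (p : Site) (l : ℕ) : Finset Site :=
  (Finset.range (l + 1)).image (fun i : ℕ => ((p.1 + (i : ℤ), p.2 - (i : ℤ)) : Site))

/-- The center row of the (south) support of the beam. -/
def centerSites (p : Site) (l : ℕ) : Finset Site :=
  (Finset.range l).image (fun i : ℕ => ((p.1 + (i : ℤ), p.2 - 1 - (i : ℤ)) : Site))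

/-- The basement row of the (south) support of the beam. -/
def basementSites (p : Site) (l : ℕ) : Finset Site :=
  (Finset.range (l + 1)).image (fun i : ℕ => ((p.1 - 1 + (i : ℤ), p.2 - 1 - (i : ℤ)) : Site))

/-- The (south) support of a beam/bridge. -/
def bridgeSupport (p : Site) (l : ℕ) : Finset Site :=
  beamSites p l ∪ centerSites p l ∪ basementSites p l

/-- The 12 sites of a slot: a 4×4 block minus its four corner sites; p is the lower-left
corner of the block. -/
def slotSites (p : Site) : Finset Site :=
  ((Finset.range 4 ×ˢ Finset.range 4).image
      (fun ij => ((p.1 + (ij.1 : ℤ), p.2 + (ij.2 : ℤ)) : Site))) \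
    {(p.1, p.2), (p.1 + 3, p.2), (p.1, p.2 + 3), (p.1 + 3, p.2 + 3)}

/-- The slot-conjugate (diagonally opposite) ordered pairs of central sites of a slot. -/
def slotDiagPairs (p : Site) : List (Site × Site) :=
  [((p.1 + 1, p.2 + 1), (p.1 + 2, p.2 + 2)), ((p.1 + 2, p.2 + 2), (p.1 + 1, p.2 + 1)),
   ((p.1 + 1, p.2 + 2), (p.1 + 2, p.2 + 1)), ((p.1 + 2, p.2 + 1), (p.1 + 1, p.2 + 2))]

/-- The type-2 sites of the bar added on side d (0 = north, 1 = south, 2 = east,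
3 = west, in dual coordinates) of the m×n dual rectangle with corner p. -/
def sideBar (p : Site) (m n : ℕ) (d : Fin 4) : Finset Site :=
  if d = 0 then dualRect (p.1 + (n : ℤ), p.2 + (n : ℤ)) m 1
  else if d = 1 then dualRect (p.1 - 1, p.2 - 1) m 1
  else if d = 2 then dualRect (p.1 + (m : ℤ), p.2 - (m : ℤ)) 1 n
  else dualRect (p.1 - 1, p.2 + 1) 1 n

/-- The length of side d of an m×n dual rectangle. -/
def sideLen (m n : ℕ) (d : Fin 4) : ℕ := if (d : ℕ) ≤ 1 then m else n

/-- The type-2 sites left after removing the outermost bar on side d of the m×n dual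
rectangle with corner p. -/
def shrunkRect (p : Site) (m n : ℕ) (d : Fin 4) : Finset Site :=
  if d = 0 then dualRect p m (n - 1)
  else if d = 1 then dualRect (p.1 + 1, p.2 + 1) m (n - 1)
  else if d = 2 then dualRect p (m - 1) n
  else dualRect (p.1 + 1, p.2 - 1) (m - 1) n

/-!
Every particle of type 2 is saturated and sits in Λ⁻⁻, so each carries exactly four active
bonds and `B = 4 n₂`; hence `H = -ε n₂ + Δ1 (n₁ - n₂)`. Since all particles of type 2 have one
parity, `n₂` is the area of the tile support and the particles of type 1, which are exactly the
neighbours of those of type 2, correspond to the lattice vertices of the tile support. For a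
quasi-square `ℓ × (ℓ+ζ)` with a bar of length `k` these number `(ℓ+1)(ℓ+ζ+1) + (k+1)·1_{k>0}`.
-/

lemma mem_nbrs_iff {x y : Site} : x ∈ nbrs y ↔ adjacent x y := by
  simp only [nbrs, Finset.mem_insert, Finset.mem_singleton, Prod.ext_iff, adjacent,
    Int.abs_eq_natAbs]
  omega

lemma mem_nbrs_comm {x y : Site} : x ∈ nbrs y ↔ y ∈ nbrs x := by
  rw [mem_nbrs_iff, mem_nbrs_iff, adjacent, adjacent, abs_sub_comm, abs_sub_comm x.2]

lemma card_nbrs (x : Site) : (nbrs x).card = 4 := by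
  rw [nbrs, Finset.card_insert_of_notMem, Finset.card_insert_of_notMem,
    Finset.card_pair] <;> simp only [Finset.mem_insert, Finset.mem_singleton, Prod.mk.injEq,
    ne_eq] <;> omega

lemma nbrs_subset_inner1_of_mem_inner2 {Λ : Finset Site} {y : Site} (hy : y ∈ inner2 Λ) :
    nbrs y ⊆ inner1 Λ := by
  simp only [inner2, Finset.mem_sdiff, intBdry, Finset.mem_filter, not_and, not_not] at hy
  exact hy.2 hy.1

section Configurations

variable {Λ : Finset Site} (η : Config Λ)

lemma mem_of_val_ne_zero {x : Site} (hx : η.val x ≠ 0) : x ∈ Λ :=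
  not_imp_comm.mp (η.zero_outside x) hx

lemma mem_type2Sites {x : Site} : x ∈ type2Sites η ↔ η.val x = 2 := by
  rw [type2Sites, Finset.mem_filter, and_iff_right_iff_imp]
  exact fun h => mem_of_val_ne_zero η (by rw [h]; decide)

lemma numBonds_eq_four_mul_numType2
    (hsat : ∀ x, η.val x = 2 → ∀ y ∈ nbrs x, η.val y = 1)
    (hin : ∀ x, η.val x = 2 → x ∈ inner2 Λ) :
    numBonds η = 4 * numType2 η := by
  have hbonds : (inner1 Λ ×ˢ inner1 Λ).filter
      (fun p => adjacent p.1 p.2 ∧ η.val p.1 = 1 ∧ η.val p.2 = 2) =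
      (type2Sites η).biUnion (fun y => (nbrs y).image (fun x => (x, y))) := by
    ext ⟨x, y⟩
    simp only [Finset.mem_filter, Finset.mem_product, Finset.mem_biUnion, Finset.mem_image,
      Prod.mk.injEq, mem_type2Sites, ← mem_nbrs_iff]
    constructor
    · rintro ⟨-, hxy, -, hy⟩
      exact ⟨y, hy, x, hxy, rfl, rfl⟩
    · rintro ⟨y, hy, x, hxy, rfl, rfl⟩
      exact ⟨⟨nbrs_subset_inner1_of_mem_inner2 (hin y hy) hxy, Finset.sdiff_subset (hin y hy)⟩,
        hxy, hsat y hy x hxy, hy⟩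
  rw [numBonds, hbonds, Finset.card_biUnion, Finset.sum_congr rfl fun y _ => by
      rw [Finset.card_image_of_injective _ fun _ _ h => congrArg Prod.fst h, card_nbrs y],
    Finset.sum_const, smul_eq_mul, mul_comm, numType2, type2Sites]
  intro y₁ _ y₂ _ hne
  simp only [Function.onFun, Finset.disjoint_left, Finset.mem_image]
  rintro _ ⟨x₁, -, rfl⟩ ⟨x₂, -, h⟩
  exact hne (congrArg Prod.snd h).symm

lemma numType1_eq_card_siteBorder
    (hsat : ∀ x, η.val x = 2 → ∀ y ∈ nbrs x, η.val y = 1)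
    (hiso : ∀ x, η.val x = 1 → ∃ y ∈ nbrs x, η.val y = 2) :
    numType1 η = (siteBorder (type2Sites η)).card := by
  unfold numType1
  congr 1
  ext x
  simp only [Finset.mem_filter, siteBorder, Finset.mem_sdiff, Finset.mem_biUnion,
    mem_type2Sites]
  constructor
  · rintro ⟨-, h1⟩
    obtain ⟨y, hxy, hy⟩ := hiso x h1
    exact ⟨⟨y, hy, mem_nbrs_comm.mp hxy⟩, by rw [h1]; decide⟩
  · rintro ⟨⟨y, hy, hxy⟩, -⟩
    have h1 := hsat y hy x hxy
    exact ⟨mem_of_val_ne_zero η (by rw [h1]; decide), h1⟩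

end Configurations

section DualLattice

def cellCorners (c : Cell) : Finset Cell :=
  {c, (c.1 + 1, c.2), (c.1, c.2 + 1), (c.1 + 1, c.2 + 1)}

lemma vertexSet_eq_biUnion (A : Finset Cell) : vertexSet A = A.biUnion cellCorners := rfl

lemma cellOf_eq (x : Site) : cellOf x = ((x.1 - x.2) / 2, (x.1 + x.2) / 2) := by
  rw [cellOf, Int.fdiv_eq_ediv_of_nonneg _ zero_le_two, Int.fdiv_eq_ediv_of_nonneg _ zero_le_two]

/-- The dual vertex at a site of the parity opposite to that of the cells. -/
def vertexOf (y : Site) : Cell := ((y.1 - y.2 + 1) / 2, (y.1 + y.2 + 1) / 2)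

lemma cellOf_injOn {S : Finset Site}
    (hS : ∀ x ∈ S, ∀ y ∈ S, (x.1 + x.2) % 2 = (y.1 + y.2) % 2) :
    Set.InjOn cellOf (S : Set Site) := by
  intro x hx y hy h
  have hxy := hS x hx y hy
  rw [cellOf_eq, cellOf_eq, Prod.mk.injEq] at h
  rw [Prod.ext_iff]
  omega

/-- `vertexOf` maps the border of a set of sites of one parity bijectively onto the corners of
its cells. -/
lemma card_siteBorder_eq_card_vertexSet {S : Finset Site}
    (hS : ∀ x ∈ S, ∀ y ∈ S, (x.1 + x.2) % 2 = (y.1 + y.2) % 2) :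
    (siteBorder S).card = (vertexSet (S.image cellOf)).card := by
  have nbr_mem_siteBorder : ∀ x ∈ S, ∀ y ∈ nbrs x, y ∈ siteBorder S := fun x hx y hy => by
    refine Finset.mem_sdiff.mpr ⟨Finset.mem_biUnion.mpr ⟨x, hx, hy⟩, fun hyS => ?_⟩
    have := hS x hx y hyS
    simp only [nbrs, Finset.mem_insert, Finset.mem_singleton, Prod.ext_iff] at hy
    omega
  apply Finset.card_bij (fun y _ => vertexOf y)
  · intro y hy
    obtain ⟨x, hx, hxy⟩ := Finset.mem_biUnion.mp (Finset.mem_sdiff.mp hy).1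
    rw [vertexSet_eq_biUnion, Finset.mem_biUnion]
    refine ⟨cellOf x, Finset.mem_image_of_mem _ hx, ?_⟩
    simp only [nbrs, cellCorners, Finset.mem_insert, Finset.mem_singleton, vertexOf, cellOf_eq,
      Prod.ext_iff] at hxy ⊢
    omega
  · intro y₁ h₁ y₂ h₂ hv
    obtain ⟨x₁, hx₁, hxy₁⟩ := Finset.mem_biUnion.mp (Finset.mem_sdiff.mp h₁).1
    obtain ⟨x₂, hx₂, hxy₂⟩ := Finset.mem_biUnion.mp (Finset.mem_sdiff.mp h₂).1
    have := hS x₁ hx₁ x₂ hx₂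
    simp only [nbrs, Finset.mem_insert, Finset.mem_singleton, vertexOf, Prod.ext_iff]
      at hxy₁ hxy₂ hv ⊢
    omega
  · intro w hw
    simp only [vertexSet_eq_biUnion, Finset.mem_biUnion, Finset.mem_image] at hw
    obtain ⟨_, ⟨x, hx, rfl⟩, hw⟩ := hw
    simp only [cellCorners, Finset.mem_insert, Finset.mem_singleton] at hw
    rcases hw with rfl | rfl | rfl | rfl
    · exact ⟨(x.1 - 1, x.2), nbr_mem_siteBorder x hx _ (by simp [nbrs]), by
        simp only [vertexOf, cellOf_eq, Prod.mk.injEq]; omega⟩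
    · exact ⟨(x.1, x.2 - 1), nbr_mem_siteBorder x hx _ (by simp [nbrs]), by
        simp only [vertexOf, cellOf_eq, Prod.mk.injEq]; omega⟩
    · exact ⟨(x.1, x.2 + 1), nbr_mem_siteBorder x hx _ (by simp [nbrs]), by
        simp only [vertexOf, cellOf_eq, Prod.mk.injEq]; omega⟩
    · exact ⟨(x.1 + 1, x.2), nbr_mem_siteBorder x hx _ (by simp [nbrs]), by
        simp only [vertexOf, cellOf_eq, Prod.mk.injEq]; omega⟩

end DualLattice

section Polyominoes

lemma vertexSet_union (A B : Finset Cell) :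
    vertexSet (A ∪ B) = vertexSet A ∪ vertexSet B :=
  Finset.union_biUnion

lemma vertexSet_box {a b c d : ℤ} (hab : a ≤ b) (hcd : c ≤ d) :
    vertexSet (Finset.Icc a b ×ˢ Finset.Icc c d) =
      Finset.Icc a (b + 1) ×ˢ Finset.Icc c (d + 1) := by
  ext v
  simp only [vertexSet_eq_biUnion, Finset.mem_biUnion, Finset.mem_product, Finset.mem_Icc,
    cellCorners, Finset.mem_insert, Finset.mem_singleton, Prod.ext_iff]
  constructor
  · rintro ⟨u, ⟨⟨h1, h2⟩, h3, h4⟩, hc⟩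
    omega
  · rintro ⟨⟨h1, h2⟩, h3, h4⟩
    exact ⟨(max a (v.1 - 1), max c (v.2 - 1)), by omega⟩

/-- A dihedral map sends the lower-left corner of a cell to one of its four corners; the
shift `(1 - f (1, 1)) / 2` brings it back. -/
def dihedralVertexMap (f : Cell → Cell) (t : Cell) (v : Cell) : Cell :=
  ((f v).1 + t.1 + (1 - (f (1, 1)).1) / 2, (f v).2 + t.2 + (1 - (f (1, 1)).2) / 2)

variable {f : Cell → Cell}

lemma injective_dihedral_add (hf : f ∈ dihedralMaps) (t : Cell) :
    Function.Injective (fun c : Cell => (((f c).1 + t.1, (f c).2 + t.2) : Cell)) := by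
  simp only [dihedralMaps, List.mem_cons, List.not_mem_nil, or_false] at hf
  intro u v h
  rcases hf with rfl | rfl | rfl | rfl | rfl | rfl | rfl | rfl <;>
  · simp only [Prod.mk.injEq] at h
    rw [Prod.ext_iff]
    omega

lemma injective_dihedralVertexMap (hf : f ∈ dihedralMaps) (t : Cell) :
    Function.Injective (dihedralVertexMap f t) := by
  simp only [dihedralMaps, List.mem_cons, List.not_mem_nil, or_false] at hf
  intro u v h
  rcases hf with rfl | rfl | rfl | rfl | rfl | rfl | rfl | rfl <;>
  · simp only [dihedralVertexMap, Prod.mk.injEq] at h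
    rw [Prod.ext_iff]
    omega

lemma cellCorners_dihedral_add (hf : f ∈ dihedralMaps) (t c : Cell) :
    cellCorners ((f c).1 + t.1, (f c).2 + t.2) =
      (cellCorners c).image (dihedralVertexMap f t) := by
  simp only [dihedralMaps, List.mem_cons, List.not_mem_nil, or_false] at hf
  ext v
  rcases hf with rfl | rfl | rfl | rfl | rfl | rfl | rfl | rfl <;>
  · simp only [cellCorners, dihedralVertexMap, Finset.image_insert, Finset.image_singleton,
      Finset.mem_insert, Finset.mem_singleton, Prod.ext_iff]
    omega

lemma card_vertexSet_image_dihedral_add (hf : f ∈ dihedralMaps) (t : Cell)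
    (A : Finset Cell) :
    (vertexSet (A.image fun c => (((f c).1 + t.1, (f c).2 + t.2) : Cell))).card =
      (vertexSet A).card := by
  rw [vertexSet_eq_biUnion, vertexSet_eq_biUnion, Finset.image_biUnion,
    Finset.biUnion_congr rfl fun c _ => cellCorners_dihedral_add hf t c, ← Finset.biUnion_image,
    Finset.card_image_of_injective _ (injective_dihedralVertexMap hf t)]

end Polyominoes

section StandardPolyomino

lemma card_box {a b c d : ℤ} {m n : ℕ} (hm : b + 1 - a = m) (hn : d + 1 - c = n) :
    (Finset.Icc a b ×ˢ Finset.Icc c d).card = m * n := by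
  rw [Finset.card_product, Int.card_Icc, Int.card_Icc, hm, hn, Int.toNat_natCast,
    Int.toNat_natCast]

lemma baseStd_eq_box_union_bar (l ζ a k : ℕ) :
    baseStd l ζ a k = Finset.Icc 0 ((l : ℤ) + ζ - 1) ×ˢ Finset.Icc 0 ((l : ℤ) - 1) ∪
      Finset.Icc (a : ℤ) (a + k - 1) ×ˢ Finset.Icc (l : ℤ) l := by
  ext ⟨x, y⟩
  simp only [baseStd, Finset.mem_union, Finset.mem_image, Finset.mem_product, Finset.mem_range,
    Finset.mem_Icc, Prod.exists, Prod.mk.injEq]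
  constructor
  · rintro (⟨i, j, ⟨hi, hj⟩, rfl, rfl⟩ | ⟨i, hi, rfl, rfl⟩) <;> omega
  · rintro (⟨⟨h1, h2⟩, h3, h4⟩ | ⟨⟨h1, h2⟩, h3, h4⟩)
    · exact Or.inl ⟨x.toNat, y.toNat, ⟨by omega, by omega⟩, by omega, by omega⟩
    · exact Or.inr ⟨(x - a).toNat, by omega, by omega, by omega⟩

lemma card_baseStd (l ζ a k : ℕ) : (baseStd l ζ a k).card = l * (l + ζ) + k := by
  rw [baseStd_eq_box_union_bar, Finset.card_union_of_disjoint,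
    card_box (m := l + ζ) (n := l) (by push_cast; ring) (by ring),
    card_box (m := k) (n := 1) (by ring) (by ring), mul_one, mul_comm]
  simp only [Finset.disjoint_left, Finset.mem_product, Finset.mem_Icc]
  omega

lemma card_vertexSet_baseStd {l ζ a k : ℕ} (hl : 1 ≤ l) (hak : a + k ≤ l + ζ) :
    (vertexSet (baseStd l ζ a k)).card =
      (l + ζ + 1) * (l + 1) + if 0 < k then k + 1 else 0 := by
  have hbox := card_box (a := 0) (b := (l : ℤ) + ζ) (c := 0) (d := l) (m := l + ζ + 1)
    (n := l + 1) (by push_cast; ring) (by push_cast; ring)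
  rw [baseStd_eq_box_union_bar, vertexSet_union, vertexSet_box (by omega) (by omega),
    sub_add_cancel, sub_add_cancel]
  rcases Nat.eq_zero_or_pos k with rfl | hk
  · rw [Nat.cast_zero, add_zero, Finset.Icc_eq_empty_of_lt (sub_one_lt _), Finset.empty_product,
      vertexSet_eq_biUnion, Finset.biUnion_empty, Finset.union_empty, hbox, if_neg (lt_irrefl 0),
      add_zero]
  -- the bar contributes only the top row of its vertices
  have hvert : Finset.Icc 0 ((l : ℤ) + ζ) ×ˢ Finset.Icc 0 (l : ℤ) ∪
      vertexSet (Finset.Icc (a : ℤ) (a + k - 1) ×ˢ Finset.Icc (l : ℤ) l) =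
      Finset.Icc 0 ((l : ℤ) + ζ) ×ˢ Finset.Icc 0 (l : ℤ) ∪
        Finset.Icc (a : ℤ) (a + k) ×ˢ Finset.Icc ((l : ℤ) + 1) (l + 1) := by
    rw [vertexSet_box (by omega) le_rfl, sub_add_cancel]
    ext ⟨x, y⟩
    simp only [Finset.mem_union, Finset.mem_product, Finset.mem_Icc]
    omega
  rw [hvert, Finset.card_union_of_disjoint, hbox,
    card_box (m := k + 1) (n := 1) (by push_cast; ring) (by ring), mul_one, if_pos hk]
  simp only [Finset.disjoint_left, Finset.mem_product, Finset.mem_Icc]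
  omega

end StandardPolyomino

theorem energy_of_standard_configuration_general
    (U Δ1 Δ2 : ℝ)
    (Λ : Finset Site) (η : Config Λ)
    (l ζ a k : ℕ) (hl : 1 ≤ l) (hak : a + k ≤ l + ζ)
    (htb : IsTbTiled η)
    (hin : ∀ x, η.val x = 2 → x ∈ inner2 Λ)
    (hpar : SameParity2 η)
    (hshape : ∃ f ∈ dihedralMaps, ∃ t : Cell,
        tileSupport η = (baseStd l ζ a k).image
          (fun c => (((f c).1 + t.1, (f c).2 + t.2) : Cell))) :
    energy U Δ1 Δ2 η =
      -(4 * U - Δ1 - Δ2) * ((l : ℝ) * ((l : ℝ) + (ζ : ℝ)) + (k : ℝ))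
        + Δ1 * ((l : ℝ) + ((l : ℝ) + (ζ : ℝ)) + 1 + (if 0 < k then 1 else 0)) := by
  obtain ⟨f, hf, t, hA⟩ := hshape
  obtain ⟨-, hsat, hiso⟩ := htb
  have hS : ∀ x ∈ type2Sites η, ∀ y ∈ type2Sites η, (x.1 + x.2) % 2 = (y.1 + y.2) % 2 :=
    fun x hx y hy => hpar x y ((mem_type2Sites η).mp hx) ((mem_type2Sites η).mp hy)
  have hn₂ : numType2 η = l * (l + ζ) + k := by
    rw [numType2, ← type2Sites, ← Finset.card_image_of_injOn (cellOf_injOn hS), ← tileSupport,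
      hA, Finset.card_image_of_injective _ (injective_dihedral_add hf t), card_baseStd]
  have hn₁ : numType1 η = (l + ζ + 1) * (l + 1) + if 0 < k then k + 1 else 0 := by
    rw [numType1_eq_card_siteBorder η hsat hiso, card_siteBorder_eq_card_vertexSet hS,
      ← tileSupport, hA, card_vertexSet_image_dihedral_add hf t, card_vertexSet_baseStd hl hak]
  rw [energy, numBonds_eq_four_mul_numType2 η hsat hin, hn₁, hn₂]
  rcases Nat.eq_zero_or_pos k with rfl | hk
  · simp only [lt_irrefl, if_false]
    push_cast
    ring
  · simp only [hk, if_true]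
    push_cast
    ring

/-- the energy of the standard configuration η^{ℓ,ζ,k} equals
−ε[ℓ(ℓ+ζ)+k] + Δ1[ℓ+(ℓ+ζ)+1+1_{k>0}]. -/
theorem energy_of_standard_configuration
    (U Δ1 Δ2 : ℝ) (hU : 0 < U) (hΔ1 : 0 < Δ1) (hΔ1U : Δ1 < U)
    (hgap : 2 * U < Δ2 - Δ1) (hsum : Δ1 + Δ2 < 4 * U)
    (Λ : Finset Site) (η : Config Λ)
    (l ζ a k : ℕ) (hl : 1 ≤ l) (hζ : ζ ≤ 1) (hak : a + k ≤ l + ζ)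
    (htb : IsTbTiled η)
    (hin : ∀ x, η.val x = 2 → x ∈ inner2 Λ)
    (hpar : SameParity2 η)
    (hshape : ∃ f ∈ dihedralMaps, ∃ t : Cell,
        tileSupport η = (baseStd l ζ a k).image
          (fun c => (((f c).1 + t.1, (f c).2 + t.2) : Cell))) :
    energy U Δ1 Δ2 η =
      -(4 * U - Δ1 - Δ2) * ((l : ℝ) * ((l : ℝ) + (ζ : ℝ)) + (k : ℝ))
        + Δ1 * ((l : ℝ) + ((l : ℝ) + (ζ : ℝ)) + 1 + (if 0 < k then 1 else 0)) :=
  energy_of_standard_configuration_general U Δ1 Δ2 Λ η l ζ a k hl hak htb hin hpar hshape
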